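/- Fix y > y₀ and define g(θ) := δ ∫_{y-θ}^y f(x) dx + h(y)(f(y) - f(y-θ)) for θ ∈ [0, y - y₀]. Then under the standing assumptions, g(0) = 0 and g'(θ) = f(y-θ)(δ + h(y)λ(y-θ)) > 0 for θ ∈ (0, y - y₀], hence g(θ) > 0 for all θ ∈ (0, y - y₀]. Consequently -δ V^{S₂}(y,θ) - h(y) V^{S₂}_y(y,θ) < 0 in the region S₂, where V^{S₂}(y,θ) = ∫_{y-θ}^y f(x) dx. -/

import Mathlib

/-!
As `g(0) = 0`, the mean value theorem makes `g` positive on `(0, y - y₀]` once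
`g'(θ) = f(y-θ)(δ + h(y)λ(y-θ))` is, and `h(y)λ(y-θ) > h(y-θ)λ(y-θ) ≥ h(y₀)λ(y₀) = -δ`:
the first inequality because `h` is increasing and `λ > 0`, the second because `hλ` is increasing
and `y - θ ≥ y₀`. Since `∂_y ∫_{y-θ}^y f = f(y) - f(y-θ)`, the last claim is `-g(θ) < 0`.
-/

open Real intervalIntegral Set

section Calculus

variable {f lam : ℝ → ℝ}

theorem hasDerivAt_of_eq_exp_integral (hlam : Continuous lam)
    (hf : ∀ y, f y = exp (∫ x in (0 : ℝ)..y, lam x)) (y : ℝ) :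
    HasDerivAt f (lam y * f y) y := by
  rw [funext hf, mul_comm]
  exact (hlam.integral_hasStrictDerivAt 0 y).hasDerivAt.exp

theorem integral_eq_sub_integral_zero (hf : Continuous f) (a b : ℝ) :
    ∫ x in a..b, f x = (∫ x in (0 : ℝ)..b, f x) - ∫ x in (0 : ℝ)..a, f x :=
  (integral_interval_sub_left (hf.intervalIntegrable _ _) (hf.intervalIntegrable _ _)).symm

theorem hasDerivAt_integral_sub_left (hf : Continuous f) (y θ : ℝ) :
    HasDerivAt (fun t => ∫ x in (y - t)..y, f x) (f (y - θ)) θ := by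
  simpa using (integral_hasDerivAt_left (hf.intervalIntegrable (y - θ) y)
    (hf.stronglyMeasurableAtFilter _ _) hf.continuousAt).comp_const_sub y θ

theorem hasDerivAt_integral_sub_const (hf : Continuous f) (θ u : ℝ) :
    HasDerivAt (fun u => ∫ x in (u - θ)..u, f x) (f u - f (u - θ)) u :=
  ((hf.integral_hasStrictDerivAt 0 u).hasDerivAt.sub
    ((hf.integral_hasStrictDerivAt 0 (u - θ)).hasDerivAt.comp_sub_const u θ)).congr_of_eventuallyEq
    (.of_forall fun _ => integral_eq_sub_integral_zero hf _ _)

theorem hasDerivAt_mul_integral_add_mul_sub (hfc : Continuous f)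
    (hfD : ∀ x, HasDerivAt f (lam x * f x) x) (δ c y θ : ℝ) :
    HasDerivAt (fun t => δ * (∫ x in (y - t)..y, f x) + c * (f y - f (y - t)))
      (f (y - θ) * (δ + c * lam (y - θ))) θ := by
  refine (((hasDerivAt_integral_sub_left hfc y θ).const_mul δ).add
    ((((hfD (y - θ)).comp_const_sub y θ).const_sub (f y)).const_mul c)).congr_deriv ?_
  ring

end Calculus

theorem lt_of_hasDerivAt_pos {g g' : ℝ → ℝ} {a b : ℝ} (hab : a < b)
    (hg : ∀ t, HasDerivAt g (g' t) t) (hg' : ∀ t ∈ Ioo a b, 0 < g' t) : g a < g b :=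
  strictMonoOn_of_hasDerivWithinAt_pos (convex_Icc a b)
    (fun t _ => (hg t).continuousAt.continuousWithinAt)
    (fun t _ => (hg t).hasDerivWithinAt) (fun t ht => hg' t (by rwa [interior_Icc] at ht))
    (left_mem_Icc.2 hab.le) (right_mem_Icc.2 hab.le) hab

theorem add_mul_pos_of_strictMono {h lam : ℝ → ℝ} {δ y₀ y z : ℝ} (hh : StrictMono h)
    (hhlam : Monotone fun z => h z * lam z) (hlam : 0 < lam z)
    (hy₀ : h y₀ * lam y₀ + δ = 0) (hz : y₀ ≤ z) (hzy : z < y) :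
    0 < δ + h y * lam z := by
  have h_lower : h y₀ * lam y₀ ≤ h z * lam z := hhlam hz
  have h_upper : h z * lam z < h y * lam z := mul_lt_mul_of_pos_right (hh hzy) hlam
  linarith

theorem stmt11_general (h lam : ℝ → ℝ) (δ y₀ : ℝ)
    (hh' : ∀ y, 0 < deriv h y)
    (hlamC1 : ContDiff ℝ 1 lam) (hlampos : ∀ y, 0 < lam y)
    (hhlam' : ∀ y, 0 < deriv (fun z => h z * lam z) y)
    (hy₀ : h y₀ * lam y₀ + δ = 0)
    (f : ℝ → ℝ)
    (hf : ∀ y, f y = Real.exp (∫ x in (0:ℝ)..y, lam x))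
    (y : ℝ)
    (g : ℝ → ℝ)
    (hg : ∀ θ, g θ = δ * (∫ x in (y - θ)..y, f x) + h y * (f y - f (y - θ))) :
    g 0 = 0 ∧
    (∀ θ ∈ Set.Ioc 0 (y - y₀),
      HasDerivAt g (f (y - θ) * (δ + h y * lam (y - θ))) θ ∧
      0 < f (y - θ) * (δ + h y * lam (y - θ))) ∧
    (∀ θ ∈ Set.Ioc 0 (y - y₀), 0 < g θ) ∧
    (∀ θ ∈ Set.Ioc 0 (y - y₀),
      -δ * (∫ x in (y - θ)..y, f x)
        - h y * deriv (fun u => ∫ x in (u - θ)..u, f x) y < 0) := by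
  have hfD := hasDerivAt_of_eq_exp_integral hlamC1.continuous hf
  have hfc : Continuous f := continuous_iff_continuousAt.2 fun x => (hfD x).continuousAt
  have hgD : ∀ θ, HasDerivAt g (f (y - θ) * (δ + h y * lam (y - θ))) θ := by
    rw [funext hg]
    exact hasDerivAt_mul_integral_add_mul_sub hfc hfD δ (h y) y
  have hg'pos : ∀ θ ∈ Ioc 0 (y - y₀), 0 < f (y - θ) * (δ + h y * lam (y - θ)) :=
    fun θ hθ => mul_pos (by rw [hf]; positivity)
      (add_mul_pos_of_strictMono (strictMono_of_deriv_pos hh')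
        (strictMono_of_deriv_pos hhlam').monotone (hlampos _) hy₀
        (by linarith [hθ.2]) (by linarith [hθ.1]))
  have hg0 : g 0 = 0 := by simp [hg]
  have hgpos : ∀ θ ∈ Ioc 0 (y - y₀), 0 < g θ := fun θ hθ =>
    hg0 ▸ lt_of_hasDerivAt_pos hθ.1 hgD fun t ht => hg'pos t ⟨ht.1, ht.2.le.trans hθ.2⟩
  refine ⟨hg0, fun θ hθ => ⟨hgD θ, hg'pos θ hθ⟩, hgpos, fun θ hθ => ?_⟩
  rw [(hasDerivAt_integral_sub_const hfc θ y).deriv]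
  linarith [hgpos θ hθ, hg θ]

/-- Lemma A.4: for fixed `y > y₀`, the function
`g(θ) = δ∫_{y-θ}^y f + h(y)(f(y) - f(y-θ))` vanishes at `0`, has derivative
`f(y-θ)(δ + h(y)λ(y-θ)) > 0` on `(0, y-y₀]`, hence is positive there; consequently
`-δ V^{S₂} - h(y) V^{S₂}_y < 0` in the region `S₂`, where `V^{S₂}(y,θ) = ∫_{y-θ}^y f`. -/
theorem stmt11 (h lam : ℝ → ℝ) (δ y₀ : ℝ)
    (hC2 : ContDiff ℝ 2 h) (hh0 : h 0 = 0)
    (hh' : ∀ y, 0 < deriv h y)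
    (hh'' : ∀ y, 0 ≤ deriv (deriv h) y)
    (hlamC1 : ContDiff ℝ 1 lam) (hlampos : ∀ y, 0 < lam y)
    (hhlam' : ∀ y, 0 < deriv (fun z => h z * lam z) y)
    (hδ : 0 < δ)
    (hy₀lt : y₀ < 0)
    (hy₀ : h y₀ * lam y₀ + δ = 0)
    (f : ℝ → ℝ)
    (hf : ∀ y, f y = Real.exp (∫ x in (0:ℝ)..y, lam x))
    (y : ℝ) (hy : y₀ < y)
    (g : ℝ → ℝ)
    (hg : ∀ θ, g θ = δ * (∫ x in (y - θ)..y, f x) + h y * (f y - f (y - θ))) :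
    g 0 = 0 ∧
    (∀ θ ∈ Set.Ioc 0 (y - y₀),
      HasDerivAt g (f (y - θ) * (δ + h y * lam (y - θ))) θ ∧
      0 < f (y - θ) * (δ + h y * lam (y - θ))) ∧
    (∀ θ ∈ Set.Ioc 0 (y - y₀), 0 < g θ) ∧
    (∀ θ ∈ Set.Ioc 0 (y - y₀),
      -δ * (∫ x in (y - θ)..y, f x)
        - h y * deriv (fun u => ∫ x in (u - θ)..u, f x) y < 0) :=
  stmt11_general h lam δ y₀ hh' hlamC1 hlampos hhlam' hy₀ f hf y g hg
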